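/- Let h : ℝⁿ → ℝ be convex and differentiable with L-Lipschitz gradient, L > 0. Let Y ⊆ ℝⁿ be nonempty closed convex and X* ⊆ Y nonempty closed convex. Let v ∈ ℝⁿ, set v̄ = Π_{X*}(v), and assume h(v̄) ≤ 0. Let β ∈ (0,1), and let B_h, M_h > 0 satisfy ‖∇h(v)‖ ≤ B_h and |h(v)| ≤ M_h; set 𝓑² = max(B_h², M_h·L). Define the SMBA feasibility step z = v − β·((h(v))₊/p_v)·∇h(v) (with division by zero interpreted as zero) and x⁺ = Π_Y(z). Then dist²(x⁺, X*) ≤ ‖v − v̄‖² − (2β(1 − β)/𝓑²)·((h(v))₊)². -/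

import Mathlib

/-!
By convexity, `v̄ ∈ X*` lies in the half-space `h v + ⟪∇h v, x - v⟫ ≤ 0`, so moving from `v`
by `t` along `-∇h v` shrinks `‖v - v̄‖²` by at least `2 t h(v) - t² ‖∇h v‖²`. When `h v > 0`
the adaptive parameter satisfies `‖∇h v‖² / 2 ≤ p_v ≤ 𝓑²`, and for `t = β h(v) / p_v` the
decrease is then at least `2β(1 - β) h(v)² / p_v ≥ 2β(1 - β) h(v)² / 𝓑²`. Finally, projecting
onto `Y ⊇ X*` does not increase the distance to `v̄`, and `dist(x⁺, X*) ≤ ‖x⁺ - v̄‖`.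
-/

open Metric

/-- The center of the ball associated with the quadratic upper approximation
of `h` at `v` with parameter `L`: `c_v = v - (1/L) ∇h(v)`. -/
noncomputable def ballCenter {n : ℕ} (h : EuclideanSpace ℝ (Fin n) → ℝ) (L : ℝ)
    (v : EuclideanSpace ℝ (Fin n)) : EuclideanSpace ℝ (Fin n) :=
  v - (1 / L) • gradient h v

/-- The radius term `R_v = ‖∇h(v)‖²/L² - 2 h(v)/L`. -/
noncomputable def ballRadius {n : ℕ} (h : EuclideanSpace ℝ (Fin n) → ℝ) (L : ℝ)
    (v : EuclideanSpace ℝ (Fin n)) : ℝ :=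
  ‖gradient h v‖ ^ 2 / L ^ 2 - 2 * h v / L

/-- The adaptive parameter `p_v = ((h(v))₊ L) / (1 - √((R_v)₊)/‖v - c_v‖)`,
where division by zero is interpreted as zero (Lean's convention). -/
noncomputable def adaptP {n : ℕ} (h : EuclideanSpace ℝ (Fin n) → ℝ) (L : ℝ)
    (v : EuclideanSpace ℝ (Fin n)) : ℝ :=
  max (h v) 0 * L /
    (1 - Real.sqrt (max (ballRadius h L v) 0) / ‖v - ballCenter h L v‖)

open scoped RealInnerProductSpace

theorem ConvexOn.hasFDerivAt_apply_sub_le {E : Type*} [NormedAddCommGroup E] [NormedSpace ℝ E]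
    {S : Set E} {f : E → ℝ} {f' : E →L[ℝ] ℝ} {x y : E} (hf : ConvexOn ℝ S f)
    (hx : x ∈ S) (hy : y ∈ S) (hf' : HasFDerivAt f f' x) :
    f' (y - x) ≤ f y - f x := by
  set γ : ℝ →ᵃ[ℝ] E := AffineMap.lineMap x y
  have hline : ConvexOn ℝ (Set.Icc 0 1) (f ∘ γ) :=
    (hf.comp_affineMap γ).subset (hf.1.mapsTo_lineMap hx hy) (convex_Icc 0 1)
  have hf'γ : HasFDerivAt f f' (γ 0) := by simpa [γ] using hf'
  have hderiv : HasDerivAt (f ∘ γ) (f' (y - x)) 0 :=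
    hf'γ.comp_hasDerivAt 0 AffineMap.hasDerivAt_lineMap
  simpa [slope_def_field, γ] using
    hline.le_slope_of_hasDerivAt (by simp) (by simp) zero_lt_one hderiv

section InnerProductSpace

variable {E : Type*} [NormedAddCommGroup E] [InnerProductSpace ℝ E]

theorem ConvexOn.sub_le_inner_gradient [CompleteSpace E] {S : Set E} {f : E → ℝ} {g x y : E}
    (hf : ConvexOn ℝ S f) (hx : x ∈ S) (hy : y ∈ S) (hg : HasGradientAt f g x) :
    f x - f y ≤ ⟪g, x - y⟫ := by
  have := hf.hasFDerivAt_apply_sub_le hx hy hg.hasFDerivAt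
  rw [InnerProductSpace.toDual_apply_apply, ← neg_sub x y, inner_neg_right] at this
  linarith

theorem Convex.norm_sub_le_of_forall_norm_sub_le {K : Set E} (hK : Convex ℝ K) {z p w : E}
    (hp : p ∈ K) (hw : w ∈ K) (hnear : ∀ y ∈ K, ‖z - p‖ ≤ ‖z - y‖) : ‖p - w‖ ≤ ‖z - w‖ := by
  have : Nonempty K := ⟨⟨p, hp⟩⟩
  have hbdd : BddBelow (Set.range fun y : K => ‖z - y‖) := ⟨0, by rintro _ ⟨y, rfl⟩; positivity⟩
  have hobtuse : ⟪z - p, w - p⟫ ≤ 0 :=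
    (norm_eq_iInf_iff_real_inner_le_zero hK hp).mp
      (le_antisymm (le_ciInf fun y => hnear y y.2) (ciInf_le hbdd ⟨p, hp⟩)) w hw
  have hexpand : ‖z - w‖ ^ 2 = ‖z - p‖ ^ 2 - 2 * ⟪z - p, w - p⟫ + ‖w - p‖ ^ 2 := by
    rw [← norm_sub_sq_real, sub_sub_sub_cancel_right]
  rw [← sq_le_sq₀ (norm_nonneg _) (norm_nonneg _), norm_sub_rev p]
  nlinarith [sq_nonneg ‖z - p‖]

theorem norm_sub_smul_sub_sq_le {v w g : E} {H β p B : ℝ} (hHg : H ≤ ⟪v - w, g⟫) (hH : 0 ≤ H)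
    (hβ : β ∈ Set.Ioo 0 1) (hp : 0 < p) (hgp : ‖g‖ ^ 2 ≤ 2 * p) (hpB : p ≤ B) :
    ‖v - (β * (H / p)) • g - w‖ ^ 2 ≤ ‖v - w‖ ^ 2 - 2 * β * (1 - β) / B * H ^ 2 := by
  obtain ⟨hβ0, hβ1⟩ := hβ
  set t := β * (H / p) with ht_def
  have ht : 0 ≤ t := by positivity
  calc ‖v - t • g - w‖ ^ 2 = ‖v - w‖ ^ 2 - 2 * t * ⟪v - w, g⟫ + t ^ 2 * ‖g‖ ^ 2 := by
        rw [sub_right_comm, norm_sub_sq_real, real_inner_smul_right, norm_smul, mul_pow,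
          Real.norm_eq_abs, sq_abs]
        ring
    _ ≤ ‖v - w‖ ^ 2 - 2 * t * H + t ^ 2 * (2 * p) := by gcongr
    _ = ‖v - w‖ ^ 2 - 2 * β * (1 - β) / p * H ^ 2 := by
        rw [ht_def]
        field_simp
        ring
    _ ≤ ‖v - w‖ ^ 2 - 2 * β * (1 - β) / B * H ^ 2 := by gcongr

end InnerProductSpace

theorem bounds_of_eq_div_one_sub_sqrt_div {G a p : ℝ} (hG : 0 ≤ G) (ha : 0 < a)
    (hp : p = a / (1 - √(max (G ^ 2 - 2 * a) 0) / G)) :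
    0 < p ∧ G ^ 2 ≤ 2 * p ∧ p ≤ max (G ^ 2) a := by
  rcases le_or_gt (G ^ 2 - 2 * a) 0 with hGa | hGa
  · rw [max_eq_right hGa, Real.sqrt_zero, zero_div, sub_zero, div_one] at hp
    subst hp
    exact ⟨ha, by linarith, le_max_right _ _⟩
  · rw [max_eq_left hGa.le] at hp
    set S := √(G ^ 2 - 2 * a)
    have hS : 0 ≤ S := Real.sqrt_nonneg _
    have hS2 : S ^ 2 = G ^ 2 - 2 * a := Real.sq_sqrt hGa.le
    have hSG : S < G := by nlinarith
    have hG0 : 0 < G := hS.trans_lt hSG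
    -- `(G - S) (G + S) = 2a` rationalizes the denominator
    have hp' : p = G * (G + S) / 2 := by
      rw [hp, one_sub_div hG0.ne', div_div_eq_mul_div, div_eq_div_iff (by linarith) two_ne_zero]
      linear_combination G * hS2
    refine ⟨by rw [hp']; positivity, by rw [hp']; nlinarith, le_max_of_le_left ?_⟩
    rw [hp']
    nlinarith

section AdaptiveParameter

variable {n : ℕ} (h : EuclideanSpace ℝ (Fin n) → ℝ) {L : ℝ}

theorem norm_sub_ballCenter (hL : 0 < L) (v : EuclideanSpace ℝ (Fin n)) :
    ‖v - ballCenter h L v‖ = ‖gradient h v‖ / L := by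
  rw [ballCenter, sub_sub_cancel, norm_smul, Real.norm_of_nonneg (by positivity)]
  ring

theorem ballRadius_eq (hL : 0 < L) (v : EuclideanSpace ℝ (Fin n)) :
    ballRadius h L v = (‖gradient h v‖ ^ 2 - 2 * (h v * L)) / L ^ 2 := by
  rw [ballRadius]
  field_simp

theorem adaptP_eq (hL : 0 < L) {v : EuclideanSpace ℝ (Fin n)} (hv : 0 ≤ h v) :
    adaptP h L v = h v * L /
      (1 - √(max (‖gradient h v‖ ^ 2 - 2 * (h v * L)) 0) / ‖gradient h v‖) := by
  have hmax (x : ℝ) : max (x / L ^ 2) 0 = max x 0 / L ^ 2 := by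
    rw [← max_div_div_right (by positivity), zero_div]
  rw [adaptP, max_eq_left hv, ballRadius_eq h hL, norm_sub_ballCenter h hL, hmax,
    Real.sqrt_div' _ (by positivity), Real.sqrt_sq hL.le, div_div_div_cancel_right₀ hL.ne']

theorem adaptP_bounds (hL : 0 < L) {v : EuclideanSpace ℝ (Fin n)} (hv : 0 < h v) :
    0 < adaptP h L v ∧ ‖gradient h v‖ ^ 2 ≤ 2 * adaptP h L v ∧
      adaptP h L v ≤ max (‖gradient h v‖ ^ 2) (h v * L) :=
  bounds_of_eq_div_one_sub_sqrt_div (norm_nonneg _) (by positivity) (adaptP_eq h hL hv.le)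

end AdaptiveParameter

theorem stmt_10_general {n : ℕ} (h : EuclideanSpace ℝ (Fin n) → ℝ)
    (hconv : ConvexOn ℝ Set.univ h) (hdiff : Differentiable ℝ h)
    (L : ℝ) (hL : 0 < L)
    (Y Xstar : Set (EuclideanSpace ℝ (Fin n)))
    (hYcv : Convex ℝ Y)
    (hXsY : Xstar ⊆ Y)
    (v : EuclideanSpace ℝ (Fin n))
    -- `vbar = Π_{X*}(v)` : projection of `v` onto `X*`
    (vbar : EuclideanSpace ℝ (Fin n)) (hvbarmem : vbar ∈ Xstar)
    (hfeas : h vbar ≤ 0)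
    (β : ℝ) (hβ : β ∈ Set.Ioo (0 : ℝ) 1)
    (Bh Mh : ℝ)
    (hgradbd : ‖gradient h v‖ ≤ Bh) (hhbd : |h v| ≤ Mh)
    (B2 : ℝ) (hB2 : B2 = max (Bh ^ 2) (Mh * L))
    -- the SMBA feasibility step (division by zero interpreted as zero)
    (z : EuclideanSpace ℝ (Fin n))
    (hz : z = v - (β * (max (h v) 0 / adaptP h L v)) • gradient h v)
    -- `xplus = Π_Y(z)` : projection of `z` onto `Y`
    (xplus : EuclideanSpace ℝ (Fin n)) (hxpmem : xplus ∈ Y)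
    (hxpproj : ∀ y ∈ Y, ‖z - xplus‖ ≤ ‖z - y‖) :
    (infDist xplus Xstar) ^ 2
      ≤ ‖v - vbar‖ ^ 2 - 2 * β * (1 - β) / B2 * (max (h v) 0) ^ 2 := by
  have hdist : infDist xplus Xstar ≤ ‖z - vbar‖ :=
    calc infDist xplus Xstar ≤ ‖xplus - vbar‖ := by
          simpa only [dist_eq_norm] using infDist_le_dist_of_mem hvbarmem
      _ ≤ ‖z - vbar‖ := hYcv.norm_sub_le_of_forall_norm_sub_le hxpmem (hXsY hvbarmem) hxpproj
  refine (pow_le_pow_left₀ infDist_nonneg hdist 2).trans ?_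
  rcases le_or_gt (h v) 0 with hv | hv
  · simp [hz, max_eq_right hv]
  obtain ⟨hp, hgp, hpmax⟩ := adaptP_bounds h hL hv
  have hpB : adaptP h L v ≤ B2 := hB2 ▸ hpmax.trans (max_le_max
    (pow_le_pow_left₀ (norm_nonneg _) hgradbd 2)
    (mul_le_mul_of_nonneg_right ((le_abs_self _).trans hhbd) hL.le))
  have hsupport : h v ≤ ⟪v - vbar, gradient h v⟫ := by
    linarith [real_inner_comm (v - vbar) (gradient h v),
      hconv.sub_le_inner_gradient trivial trivial (hdiff v).hasGradientAt (y := vbar)]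
  rw [hz, max_eq_left hv.le]
  exact norm_sub_smul_sub_sq_le hsupport hv.le hβ hp hgp hpB

theorem stmt_10 {n : ℕ} (h : EuclideanSpace ℝ (Fin n) → ℝ)
    (hconv : ConvexOn ℝ Set.univ h) (hdiff : Differentiable ℝ h)
    (L : ℝ) (hL : 0 < L)
    (hLip : ∀ x y, ‖gradient h x - gradient h y‖ ≤ L * ‖x - y‖)
    (Y Xstar : Set (EuclideanSpace ℝ (Fin n)))
    (hYne : Y.Nonempty) (hYcl : IsClosed Y) (hYcv : Convex ℝ Y)
    (hXsne : Xstar.Nonempty) (hXscl : IsClosed Xstar) (hXscv : Convex ℝ Xstar)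
    (hXsY : Xstar ⊆ Y)
    (v : EuclideanSpace ℝ (Fin n))
    -- `vbar = Π_{X*}(v)` : projection of `v` onto `X*`
    (vbar : EuclideanSpace ℝ (Fin n)) (hvbarmem : vbar ∈ Xstar)
    (hvbarproj : ∀ y ∈ Xstar, ‖v - vbar‖ ≤ ‖v - y‖)
    (hfeas : h vbar ≤ 0)
    (β : ℝ) (hβ : β ∈ Set.Ioo (0 : ℝ) 1)
    (Bh Mh : ℝ) (hBh : 0 < Bh) (hMh : 0 < Mh)
    (hgradbd : ‖gradient h v‖ ≤ Bh) (hhbd : |h v| ≤ Mh)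
    (B2 : ℝ) (hB2 : B2 = max (Bh ^ 2) (Mh * L))
    -- the SMBA feasibility step (division by zero interpreted as zero)
    (z : EuclideanSpace ℝ (Fin n))
    (hz : z = v - (β * (max (h v) 0 / adaptP h L v)) • gradient h v)
    -- `xplus = Π_Y(z)` : projection of `z` onto `Y`
    (xplus : EuclideanSpace ℝ (Fin n)) (hxpmem : xplus ∈ Y)
    (hxpproj : ∀ y ∈ Y, ‖z - xplus‖ ≤ ‖z - y‖) :
    (infDist xplus Xstar) ^ 2
      ≤ ‖v - vbar‖ ^ 2 - 2 * β * (1 - β) / B2 * (max (h v) 0) ^ 2 :=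
  stmt_10_general h hconv hdiff L hL Y Xstar hYcv hXsY v vbar hvbarmem hfeas β hβ Bh Mh hgradbd hhbd
    B2 hB2 z hz xplus hxpmem hxpproj
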